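/- arXiv:1809.04005 — 2 statements merged into one kernel-verified Lean document; each statement's English description precedes it below -/
import Mathlib

section
/- Let k ∈ ℕ with k ≥ 1, α ∈ (k−1, k), a ∈ ℝ, b > a and φ ∈ C^k([a,b]). Define g(t) := −(1/Γ(k−α)) ∫_a^b φ^{(k)}(τ) (t−τ)^{k−α−1} dτ for t > b (this integral is finite for every t ∈ [b,+∞)). Then a function u ∈ C^{k,α}_a satisfies D_a^α u(t) = 0 for all t ∈ (b,+∞) and u(t) = φ(t) for all t ∈ [a, b], if and only if it satisfies D_b^α u(t) = g(t) for all t ∈ (b,+∞) and u(t) = φ(t) for all t ∈ [a, b]. -/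
open MeasureTheory Set

noncomputable section

/-- The open interval `(a, +∞)` in `ℝ`, for an initial point `a ∈ ℝ ∪ {-∞}`
(encoded as `a : EReal`, with `a = ⊥` playing the role of `-∞`). -/
def upSet (a : EReal) : Set ℝ := {τ : ℝ | a < (τ : EReal)}

/-- The closure of `(a, +∞)` in `ℝ`: it is `[a, +∞)` if `a ∈ ℝ`, and all of `ℝ` if `a = -∞`. -/
def upBar (a : EReal) : Set ℝ := {τ : ℝ | a ≤ (τ : EReal)}

/-- `f ∈ AC^{k-1}(s)`: the iterated derivatives of `f` of orders `0,…,k-1` (taken within `s`)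
are absolutely continuous on `s`, i.e. each of them is the (locally integrable) indefinite
integral of the next one (fundamental theorem of calculus characterization of absolute
continuity). -/
def ACkOn (k : ℕ) (f : ℝ → ℝ) (s : Set ℝ) : Prop :=
  ∀ j < k, ∀ x ∈ s, ∀ y ∈ s,
    IntervalIntegrable (iteratedDerivWithin (j + 1) f s) volume x y ∧
    iteratedDerivWithin j f s y - iteratedDerivWithin j f s x =
      ∫ τ in x..y, iteratedDerivWithin (j + 1) f s τ

/-- The space `C^{k,β}_a`: functions `f` with `f ∈ AC^{k-1}` on the closure of `(a,t)` and
`Θ_{k,β,f,t}(τ) = f^{(k)}(τ) (t-τ)^{k-β-1} ∈ L¹((a,t))`, for every real `t > a`. -/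
def CkBeta (k : ℕ) (β : ℝ) (a : EReal) (f : ℝ → ℝ) : Prop :=
  ∀ t : ℝ, a < (t : EReal) →
    ACkOn k f (upBar a ∩ Iic t) ∧
    IntegrableOn (fun τ : ℝ => iteratedDeriv k f τ * (t - τ) ^ ((k : ℝ) - β - 1))
      (upSet a ∩ Iio t)

/-- The Caputo derivative `D_a^α u (t) = (1/Γ(k-α)) ∫_a^t u^{(k)}(τ) (t-τ)^{k-α-1} dτ`
of order `α ∈ (k-1,k)` and initial point `a ∈ ℝ ∪ {-∞}`. -/
def caputo (k : ℕ) (α : ℝ) (a : EReal) (u : ℝ → ℝ) (t : ℝ) : ℝ :=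
  (1 / Real.Gamma ((k : ℝ) - α)) *
    ∫ τ in upSet a ∩ Iio t, iteratedDeriv k u τ * (t - τ) ^ ((k : ℝ) - α - 1)

/-- The norm `‖g‖_{C^h([0,1])} = ∑_{j=0}^h sup_{t ∈ [0,1]} |g^{(j)}(t)|`. -/
def chNorm (h : ℕ) (g : ℝ → ℝ) : ℝ :=
  ∑ j ∈ Finset.range (h + 1),
    sSup ((fun t => |iteratedDerivWithin j g (Icc (0 : ℝ) 1) t|) '' Icc (0 : ℝ) 1)

/-- The operator `g ↦ (1/ψ') g'`. -/
def psiDeriv (ψ : ℝ → ℝ) (g : ℝ → ℝ) : ℝ → ℝ := fun τ => (deriv ψ τ)⁻¹ * deriv g τ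

/-- The `ψ`-Caputo derivative
`D_a^{α,ψ} u (t) = (1/Γ(k-α)) ∫_a^t u_ψ^{(k)}(τ) (ψ(t)-ψ(τ))^{k-α-1} ψ'(τ) dτ`
of order `α ∈ (k-1,k)` and initial point `a ∈ ℝ`, where `u_ψ^{(k)} = ((1/ψ') d/dτ)^k u`. -/
def caputoPsi (k : ℕ) (α : ℝ) (ψ : ℝ → ℝ) (a : ℝ) (u : ℝ → ℝ) (t : ℝ) : ℝ :=
  (1 / Real.Gamma ((k : ℝ) - α)) *
    ∫ τ in Ioo a t, (psiDeriv ψ)^[k] u τ * (ψ t - ψ τ) ^ ((k : ℝ) - α - 1) * deriv ψ τ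

end
/-
Since `u = φ` on `[a, b]`, the `k`-th derivative of `u` agrees with that of `φ` on `(a, b)`.
Splitting the integral defining `D_a^α u(t)` at `b` therefore gives the memory identity
`D_a^α u(t) = D_b^α u(t) - g(t)` for `t > b`, from which both implications are immediate.
-/

open Filter Topology

lemma upSet_coe_inter_Iio (a t : ℝ) : upSet (a : EReal) ∩ Iio t = Ioo a t := by
  ext τ
  simp [upSet]

lemma iteratedDeriv_eq_iteratedDerivWithin_of_eqOn {𝕜 F : Type*} [NontriviallyNormedField 𝕜]
    [NormedAddCommGroup F] [NormedSpace 𝕜 F] {n : ℕ} {u φ : 𝕜 → F} {s : Set 𝕜} {x : 𝕜}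
    (hs : s ∈ 𝓝 x) (huφ : EqOn u φ s) :
    iteratedDeriv n u x = iteratedDerivWithin n φ s x := by
  have hsx : (univ : Set 𝕜) =ᶠ[𝓝 x] s := by
    filter_upwards [hs] with y hy
    exact propext (iff_of_true (mem_univ y) hy)
  rw [← iteratedDerivWithin_univ, iteratedDerivWithin_eq_iteratedFDerivWithin,
    iteratedFDerivWithin_congr_set hsx, ← iteratedDerivWithin_eq_iteratedFDerivWithin]
  exact iteratedDerivWithin_congr huφ (mem_of_mem_nhds hs)

lemma setIntegral_Ioo_eq_add {E : Type*} [NormedAddCommGroup E] [NormedSpace ℝ E] {f : ℝ → E}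
    {a b t : ℝ} (hab : a ≤ b) (hbt : b ≤ t) (hf : IntegrableOn f (Ioo a t)) :
    ∫ τ in Ioo a t, f τ = (∫ τ in Ioo a b, f τ) + ∫ τ in Ioo b t, f τ := by
  have hIoo : ∀ {x y : ℝ}, x ≤ y → ∫ τ in Ioo x y, f τ = ∫ τ in x..y, f τ := fun hxy => by
    rw [intervalIntegral.integral_of_le hxy, setIntegral_congr_set Ioo_ae_eq_Ioc]
  have hf' : IntegrableOn f (Ioc a t) := hf.congr_set_ae Ioo_ae_eq_Ioc.symm
  rw [hIoo hab, hIoo hbt, hIoo (hab.trans hbt), intervalIntegral.integral_add_adjacent_intervals]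
  · exact (intervalIntegrable_iff_integrableOn_Ioc_of_le hab).2
      (hf'.mono_set (Ioc_subset_Ioc_right hbt))
  · exact (intervalIntegrable_iff_integrableOn_Ioc_of_le hbt).2
      (hf'.mono_set (Ioc_subset_Ioc_left hab))

lemma caputo_coe_eq_caputo_coe_add {k : ℕ} {α : ℝ} {u : ℝ → ℝ} {a b t : ℝ}
    (hab : a ≤ b) (hbt : b ≤ t)
    (hu : IntegrableOn (fun τ => iteratedDeriv k u τ * (t - τ) ^ ((k : ℝ) - α - 1)) (Ioo a t)) :
    caputo k α (a : EReal) u t = caputo k α (b : EReal) u t +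
      1 / Real.Gamma ((k : ℝ) - α) *
        ∫ τ in Ioo a b, iteratedDeriv k u τ * (t - τ) ^ ((k : ℝ) - α - 1) := by
  simp only [caputo, upSet_coe_inter_Iio]
  rw [setIntegral_Ioo_eq_add hab hbt hu]
  ring

theorem caputo_memory_equiv_general (k : ℕ) (α : ℝ)
    (a b : ℝ) (hab : a < b) (φ : ℝ → ℝ)
    (u : ℝ → ℝ) (hu : CkBeta k α (a : EReal) u) :
    ((∀ t : ℝ, b < t → caputo k α (a : EReal) u t = 0) ∧
        ∀ t ∈ Set.Icc a b, u t = φ t) ↔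
    ((∀ t : ℝ, b < t → caputo k α (b : EReal) u t =
        -(1 / Real.Gamma ((k : ℝ) - α)) *
          ∫ τ in Set.Ioo a b,
            iteratedDerivWithin k φ (Set.Icc a b) τ * (t - τ) ^ ((k : ℝ) - α - 1)) ∧
      ∀ t ∈ Set.Icc a b, u t = φ t) := by
  suffices memory : (∀ t ∈ Icc a b, u t = φ t) → ∀ t, b < t →
      caputo k α (a : EReal) u t = caputo k α (b : EReal) u t +
        1 / Real.Gamma ((k : ℝ) - α) *
          ∫ τ in Ioo a b, iteratedDerivWithin k φ (Icc a b) τ * (t - τ) ^ ((k : ℝ) - α - 1) by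
    constructor
    · rintro ⟨hzero, hinit⟩
      exact ⟨fun t ht => by linarith [memory hinit t ht, hzero t ht], hinit⟩
    · rintro ⟨hsource, hinit⟩
      exact ⟨fun t ht => by linarith [memory hinit t ht, hsource t ht], hinit⟩
  intro hinit t hbt
  have hint := (hu t (EReal.coe_lt_coe_iff.2 (hab.trans hbt))).2
  rw [upSet_coe_inter_Iio] at hint
  rw [caputo_coe_eq_caputo_coe_add hab.le hbt.le hint]
  congr 2
  refine setIntegral_congr_fun measurableSet_Ioo fun τ hτ => ?_
  rw [iteratedDeriv_eq_iteratedDerivWithin_of_eqOn (Icc_mem_nhds hτ.1 hτ.2) hinit]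

/-- equivalence between the homogeneous problem with initial point `a`
and the non-homogeneous problem with initial point `b` and memory source `g`
(Lemma 2.1 of the paper). -/
theorem caputo_memory_equiv (k : ℕ) (hk : 1 ≤ k) (α : ℝ)
    (hα : α ∈ Set.Ioo ((k : ℝ) - 1) (k : ℝ))
    (a b : ℝ) (hab : a < b) (φ : ℝ → ℝ) (hφ : ContDiffOn ℝ k φ (Set.Icc a b))
    (u : ℝ → ℝ) (hu : CkBeta k α (a : EReal) u) :
    ((∀ t : ℝ, b < t → caputo k α (a : EReal) u t = 0) ∧
        ∀ t ∈ Set.Icc a b, u t = φ t) ↔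
    ((∀ t : ℝ, b < t → caputo k α (b : EReal) u t =
        -(1 / Real.Gamma ((k : ℝ) - α)) *
          ∫ τ in Set.Ioo a b,
            iteratedDerivWithin k φ (Set.Icc a b) τ * (t - τ) ^ ((k : ℝ) - α - 1)) ∧
      ∀ t ∈ Set.Icc a b, u t = φ t) :=
  caputo_memory_equiv_general k α a b hab φ u hu
end

section
/- Let k ∈ ℕ with k ≥ 1 and α ∈ (k−1, k). Let a ∈ ℝ ∪ {−∞} and b ∈ (a,+∞). Let f ∈ C^{k,α}_a and g ∈ C^{k,α}_b satisfy f^{(j)}(b) = g^{(j)}(b) for every j ∈ {0,…,k−1}. Define h on the closure of (a,+∞) by h(t) := f(t) if t ≤ b and h(t) := g(t) if t > b. Then h ∈ C^{k,α}_a. -/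
open MeasureTheory Set

/-!
Away from `b` the glued function agrees near each point with `f` or with `g`, and so do all its
derivatives within `s = upBar a ∩ Iic t`. At `b`, the matching jets make the glued derivatives
`H j = glue b f⁽ʲ⁾ g⁽ʲ⁾` a chain of primitives `H j y - H j x = ∫ x..y, H (j+1)`, and since `b` is
interior to `s` (when `b < t`) the fundamental theorem of calculus identifies `H (j+1) b` as the
derivative of `H j` there, for `j + 1 < k`. The `k`-th derivative is only identified off `b`, a null set, which
is all the integral conditions see.
-/

open Filter Topology Interval

theorem iteratedDerivWithin_inter {𝕜 F : Type*} [NontriviallyNormedField 𝕜] [NormedAddCommGroup F]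
    [NormedSpace 𝕜 F] {n : ℕ} {f : 𝕜 → F} {s u : Set 𝕜} {x : 𝕜} (hu : u ∈ 𝓝 x) :
    iteratedDerivWithin n f (s ∩ u) x = iteratedDerivWithin n f s x := by
  simp only [iteratedDerivWithin_eq_iteratedFDerivWithin, iteratedFDerivWithin_inter hu]

section upSet

variable {a : EReal}

theorem mem_upSet {τ : ℝ} : τ ∈ upSet a ↔ a < τ := Iff.rfl

theorem mem_upBar {τ : ℝ} : τ ∈ upBar a ↔ a ≤ τ := Iff.rfl

theorem upSet_coe (b : ℝ) : upSet b = Ioi b := by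
  ext τ
  simp [upSet]

theorem upBar_coe (b : ℝ) : upBar b = Ici b := by
  ext τ
  simp [upBar]

theorem isOpen_upSet : IsOpen (upSet a) :=
  isOpen_Ioi.preimage continuous_coe_real_ereal

theorem ordConnected_upBar : (upBar a).OrdConnected :=
  ⟨fun _ hx _ _ _ hz => hx.trans (EReal.coe_le_coe_iff.2 hz.1)⟩

theorem upBar_mem_nhds {b : ℝ} (hab : a < b) : upBar a ∈ 𝓝 b :=
  mem_of_superset (isOpen_upSet.mem_nhds hab) fun _ hτ => mem_upBar.2 (mem_upSet.1 hτ).le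

end upSet

noncomputable def glue (b : ℝ) (f g : ℝ → ℝ) : ℝ → ℝ := fun τ => if τ ≤ b then f τ else g τ

section glue

variable {b τ : ℝ} {f g : ℝ → ℝ}

theorem glue_of_le (h : τ ≤ b) : glue b f g τ = f τ := if_pos h

theorem glue_of_gt (h : b < τ) : glue b f g τ = g τ := if_neg h.not_ge

theorem glue_eventuallyEq_of_lt (h : τ < b) : glue b f g =ᶠ[𝓝 τ] f :=
  eventually_of_mem (Iio_mem_nhds h) fun _ hx => glue_of_le (le_of_lt hx)

theorem glue_eventuallyEq_of_gt (h : b < τ) : glue b f g =ᶠ[𝓝 τ] g :=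
  eventually_of_mem (Ioi_mem_nhds h) fun _ hx => glue_of_gt hx

theorem derivWithin_glue_of_lt {s : Set ℝ} (h : τ < b) :
    derivWithin (glue b f g) s τ = derivWithin f s τ :=
  (glue_eventuallyEq_of_lt h).derivWithin_eq_of_nhds

theorem derivWithin_glue_of_gt {s : Set ℝ} (h : b < τ) :
    derivWithin (glue b f g) s τ = derivWithin g (s ∩ Ici b) τ := by
  rw [derivWithin_inter (Ici_mem_nhds h), (glue_eventuallyEq_of_gt h).derivWithin_eq_of_nhds]

theorem iteratedDeriv_glue_of_lt (k : ℕ) (h : τ < b) :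
    iteratedDeriv k (glue b f g) τ = iteratedDeriv k f τ :=
  (glue_eventuallyEq_of_lt h).iteratedDeriv_eq k

theorem iteratedDeriv_glue_of_gt (k : ℕ) (h : b < τ) :
    iteratedDeriv k (glue b f g) τ = iteratedDeriv k g τ :=
  (glue_eventuallyEq_of_gt h).iteratedDeriv_eq k

theorem IntegrableOn.iteratedDeriv_glue_mul {k : ℕ} {w : ℝ → ℝ} {E : Set ℝ} (hE : MeasurableSet E)
    (hf : IntegrableOn (fun τ => iteratedDeriv k f τ * w τ) (E ∩ Iio b))
    (hg : IntegrableOn (fun τ => iteratedDeriv k g τ * w τ) (E ∩ Ioi b)) :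
    IntegrableOn (fun τ => iteratedDeriv k (glue b f g) τ * w τ) E := by
  have hl : IntegrableOn (fun τ => iteratedDeriv k (glue b f g) τ * w τ) (E ∩ Iio b) :=
    hf.congr_fun (fun τ hτ => by rw [iteratedDeriv_glue_of_lt k hτ.2])
      (hE.inter measurableSet_Iio)
  have hr : IntegrableOn (fun τ => iteratedDeriv k (glue b f g) τ * w τ) (E ∩ Ioi b) :=
    hg.congr_fun (fun τ hτ => by rw [iteratedDeriv_glue_of_gt k hτ.2])
      (hE.inter measurableSet_Ioi)
  refine ((hl.union (IntegrableOn.of_measure_zero (measure_singleton b))).union hr).mono_set ?_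
  intro τ hτ
  rcases lt_trichotomy τ b with h | rfl | h
  · exact Or.inl (Or.inl ⟨hτ, h⟩)
  · exact Or.inl (Or.inr rfl)
  · exact Or.inr ⟨hτ, h⟩

end glue

def IsPrimitiveOn (Φ φ : ℝ → ℝ) (s : Set ℝ) : Prop :=
  ∀ x ∈ s, ∀ y ∈ s, IntervalIntegrable φ volume x y ∧ Φ y - Φ x = ∫ τ in x..y, φ τ

namespace IsPrimitiveOn

variable {Φ Ψ φ ψ : ℝ → ℝ} {s t : Set ℝ} {b : ℝ}

theorem of_forall_base
    (h : ∀ y ∈ s, IntervalIntegrable φ volume b y ∧ Φ y - Φ b = ∫ τ in b..y, φ τ) :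
    IsPrimitiveOn Φ φ s := by
  intro x hx y hy
  obtain ⟨hxi, hxe⟩ := h x hx
  obtain ⟨hyi, hye⟩ := h y hy
  refine ⟨hxi.symm.trans hyi, ?_⟩
  rw [← intervalIntegral.integral_add_adjacent_intervals hxi.symm hyi,
    intervalIntegral.integral_symm b x]
  linarith

theorem mono (h : IsPrimitiveOn Φ φ s) (hts : t ⊆ s) : IsPrimitiveOn Φ φ t :=
  fun x hx y hy => h x (hts hx) y (hts hy)

theorem congr (h : IsPrimitiveOn Φ φ s) (hs : s.OrdConnected) (hΦ : EqOn Φ Ψ s)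
    (hφ : ∀ᵐ τ, τ ∈ s → φ τ = ψ τ) : IsPrimitiveOn Ψ ψ s := by
  intro x hx y hy
  have hae : ∀ᵐ τ, τ ∈ Ι x y → φ τ = ψ τ :=
    hφ.mono fun τ h hτ => h (hs.uIcc_subset hx hy (uIoc_subset_uIcc hτ))
  obtain ⟨hi, he⟩ := h x hx y hy
  refine ⟨hi.congr_ae ((ae_restrict_iff' measurableSet_uIoc).2 hae), ?_⟩
  rw [← hΦ hx, ← hΦ hy, he, intervalIntegral.integral_congr_ae hae]

theorem eventuallyEq_add_integral (h : IsPrimitiveOn Φ φ s) (hs : s ∈ 𝓝 b) :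
    Φ =ᶠ[𝓝 b] fun y => Φ b + ∫ τ in b..y, φ τ :=
  eventually_of_mem hs fun y hy => by linarith [(h b (mem_of_mem_nhds hs) y hy).2]

theorem exists_Icc_mem_nhds_intervalIntegrable (h : IsPrimitiveOn Φ φ s) (hs : s ∈ 𝓝 b) :
    ∃ c d, b ∈ Icc c d ∧ Icc c d ∈ 𝓝 b ∧ IntervalIntegrable φ volume c d := by
  obtain ⟨c, d, hb, hcd, hsub⟩ := exists_Icc_mem_subset_of_mem_nhds hs
  have hcd' : c ≤ d := hb.1.trans hb.2
  exact ⟨c, d, hb, hcd, (h c (hsub ⟨le_rfl, hcd'⟩) d (hsub ⟨hcd', le_rfl⟩)).1⟩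

theorem continuousAt (h : IsPrimitiveOn Φ φ s) (hs : s ∈ 𝓝 b) : ContinuousAt Φ b := by
  obtain ⟨c, d, hb, hcd, hint⟩ := h.exists_Icc_mem_nhds_intervalIntegrable hs
  have hprim : ContinuousAt (fun y => ∫ τ in b..y, φ τ) b := by
    refine (intervalIntegral.continuousWithinAt_primitive (measure_singleton b) ?_).continuousAt hcd
    rwa [min_eq_right hb.1, max_eq_right hb.2]
  exact (continuousAt_const.add hprim).congr (h.eventuallyEq_add_integral hs).symm

theorem hasDerivAt (h : IsPrimitiveOn Φ φ s) (hs : s ∈ 𝓝 b) (hφ : ContinuousAt φ b) :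
    HasDerivAt Φ (φ b) b := by
  obtain ⟨c, d, hb, hcd, hint⟩ := h.exists_Icc_mem_nhds_intervalIntegrable hs
  have hmeas : StronglyMeasurableAtFilter φ (𝓝 b) :=
    AEStronglyMeasurable.stronglyMeasurableAtFilter_of_mem
      ((intervalIntegrable_iff_integrableOn_Icc_of_le (hb.1.trans hb.2)).1 hint).1 hcd
  exact ((intervalIntegral.integral_hasDerivAt_right .refl hmeas hφ).const_add (Φ b))
    |>.congr_of_eventuallyEq (h.eventuallyEq_add_integral hs)

protected theorem glue (hs : s.OrdConnected) (h₁ : IsPrimitiveOn Φ φ (s ∩ Iic b))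
    (h₂ : IsPrimitiveOn Ψ ψ (s ∩ Ici b)) (hb : Φ b = Ψ b) (hbs : b ∈ s) :
    IsPrimitiveOn (glue b Φ Ψ) (glue b φ ψ) s := by
  have h₁' : IsPrimitiveOn (glue b Φ Ψ) (glue b φ ψ) (s ∩ Iic b) :=
    h₁.congr (hs.inter ordConnected_Iic) (fun τ hτ => (glue_of_le hτ.2).symm)
      (Eventually.of_forall fun τ hτ => (glue_of_le hτ.2).symm)
  have h₂' : IsPrimitiveOn (glue b Φ Ψ) (glue b φ ψ) (s ∩ Ici b) := by
    refine h₂.congr (hs.inter ordConnected_Ici) (fun τ hτ => ?_) ?_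
    · obtain rfl | hlt := (mem_Ici.1 hτ.2).eq_or_lt
      · rw [glue_of_le le_rfl, hb]
      · exact (glue_of_gt hlt).symm
    · filter_upwards [Measure.ae_ne volume b] with τ hne hτ
      exact (glue_of_gt ((mem_Ici.1 hτ.2).lt_of_ne' hne)).symm
  refine of_forall_base (b := b) fun y hy => ?_
  rcases le_total y b with hyb | hby
  · exact h₁' b ⟨hbs, self_mem_Iic⟩ y ⟨hy, hyb⟩
  · exact h₂' b ⟨hbs, self_mem_Ici⟩ y ⟨hy, hby⟩

end IsPrimitiveOn

section ACkOn

variable {k : ℕ} {f g : ℝ → ℝ} {s : Set ℝ} {b : ℝ}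

theorem ACkOn.congr (h : ACkOn k f s) (hs : s.OrdConnected) (hfg : EqOn f g s) : ACkOn k g s :=
  fun j hj => IsPrimitiveOn.congr (h j hj) hs (iteratedDerivWithin_congr hfg)
    (Eventually.of_forall fun _ hτ => iteratedDerivWithin_congr hfg hτ)

theorem iteratedDerivWithin_succ_of_eqOn_glue {u : ℝ → ℝ} {j : ℕ} {τ : ℝ}
    (hj : EqOn (iteratedDerivWithin j u s)
      (glue b (iteratedDerivWithin j f s) (iteratedDerivWithin j g (s ∩ Ici b))) s)
    (hτ : τ ∈ s) (hne : τ ≠ b) :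
    iteratedDerivWithin (j + 1) u s τ =
      glue b (iteratedDerivWithin (j + 1) f s) (iteratedDerivWithin (j + 1) g (s ∩ Ici b)) τ := by
  rw [iteratedDerivWithin_succ, derivWithin_congr hj (hj hτ)]
  rcases hne.lt_or_gt with h | h
  · rw [derivWithin_glue_of_lt h, glue_of_le h.le, iteratedDerivWithin_succ]
  · rw [derivWithin_glue_of_gt h, glue_of_gt h, iteratedDerivWithin_succ]

protected theorem ACkOn.glue (hs : s.OrdConnected) (hb : s ∈ 𝓝 b) (hf : ACkOn k f s)
    (hg : ACkOn k g (s ∩ Ici b))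
    (hjet : ∀ j < k, iteratedDerivWithin j f s b = iteratedDerivWithin j g (s ∩ Ici b) b) :
    ACkOn k (glue b f g) s := by
  set H : ℕ → ℝ → ℝ := fun j =>
    glue b (iteratedDerivWithin j f s) (iteratedDerivWithin j g (s ∩ Ici b))
  have hH : ∀ j < k, IsPrimitiveOn (H j) (H (j + 1)) s := fun j hj =>
    IsPrimitiveOn.glue hs (IsPrimitiveOn.mono (hf j hj) inter_subset_left) (hg j hj) (hjet j hj)
      (mem_of_mem_nhds hb)
  have hEq : ∀ j < k, EqOn (iteratedDerivWithin j (glue b f g) s) (H j) s := by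
    intro j
    induction j with
    | zero => exact fun _ _ _ => rfl
    | succ j ih =>
      intro hj τ hτ
      obtain rfl | hne := eq_or_ne τ b
      · have hderiv := (hH j (by omega)).hasDerivAt hb ((hH (j + 1) hj).continuousAt hb)
        rw [iteratedDerivWithin_succ, derivWithin_congr (ih (by omega)) (ih (by omega) hτ),
          hderiv.hasDerivWithinAt.derivWithin (uniqueDiffWithinAt_of_mem_nhds hb)]
      · exact iteratedDerivWithin_succ_of_eqOn_glue (ih (by omega)) hτ hne
  intro j hj
  refine (hH j hj).congr hs (hEq j hj).symm ?_
  filter_upwards [Measure.ae_ne volume b] with τ hne hτ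
  exact (iteratedDerivWithin_succ_of_eqOn_glue (hEq j hj) hτ hne).symm

end ACkOn

theorem caputo_space_gluing_general (k : ℕ) (α : ℝ)
    (a : EReal) (b : ℝ) (hab : a < (b : EReal))
    (f g : ℝ → ℝ) (hf : CkBeta k α a f) (hg : CkBeta k α (b : EReal) g)
    (hjet : ∀ j < k,
      iteratedDerivWithin j f (upBar a) b = iteratedDerivWithin j g (upBar (b : EReal)) b) :
    CkBeta k α a (fun t => if t ≤ b then f t else g t) := by
  show CkBeta k α a (glue b f g)
  intro t ht
  obtain ⟨hfAC, hfΘ⟩ := hf t ht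
  have hs : (upBar a ∩ Iic t).OrdConnected := ordConnected_upBar.inter ordConnected_Iic
  refine ⟨?_, ?_⟩
  · rcases le_or_gt t b with htb | hbt
    · exact hfAC.congr hs fun τ hτ => (glue_of_le ((mem_Iic.1 hτ.2).trans htb)).symm
    have hset : upBar a ∩ Iic t ∩ Ici b = upBar b ∩ Iic t := by
      ext τ
      simp only [upBar_coe, mem_inter_iff, mem_upBar, mem_Iic, mem_Ici]
      exact ⟨fun h => ⟨h.2, h.1.2⟩,
        fun h => ⟨⟨hab.le.trans (EReal.coe_le_coe_iff.2 h.1), h.2⟩, h.1⟩⟩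
    refine ACkOn.glue hs (inter_mem (upBar_mem_nhds hab) (Iic_mem_nhds hbt)) hfAC
      (hset ▸ (hg t (EReal.coe_lt_coe_iff.2 hbt)).1) fun j hj => ?_
    rw [hset, iteratedDerivWithin_inter (Iic_mem_nhds hbt),
      iteratedDerivWithin_inter (Iic_mem_nhds hbt)]
    exact hjet j hj
  · refine IntegrableOn.iteratedDeriv_glue_mul (isOpen_upSet.inter isOpen_Iio).measurableSet
      (hfΘ.mono_set inter_subset_left) ?_
    rcases le_or_gt t b with htb | hbt
    · refine integrableOn_empty.mono_set fun τ hτ => ?_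
      exact absurd (hτ.1.2.trans_le htb) (not_lt.2 (mem_Ioi.1 hτ.2).le)
    · refine (hg t (EReal.coe_lt_coe_iff.2 hbt)).2.mono_set fun τ hτ => ?_
      rw [upSet_coe]
      exact ⟨hτ.2, hτ.1.2⟩

/-- gluing a function of `C^{k,α}_a` with a function of `C^{k,α}_b`
matching the derivative jet of order `k-1` at `b` produces a function of `C^{k,α}_a`
(Lemma A.2 of the paper). -/
theorem caputo_space_gluing (k : ℕ) (hk : 1 ≤ k) (α : ℝ)
    (hα : α ∈ Set.Ioo ((k : ℝ) - 1) (k : ℝ))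
    (a : EReal) (b : ℝ) (hab : a < (b : EReal))
    (f g : ℝ → ℝ) (hf : CkBeta k α a f) (hg : CkBeta k α (b : EReal) g)
    (hjet : ∀ j < k,
      iteratedDerivWithin j f (upBar a) b = iteratedDerivWithin j g (upBar (b : EReal)) b) :
    CkBeta k α a (fun t => if t ≤ b then f t else g t) :=
  caputo_space_gluing_general k α a b hab f g hf hg hjet
end
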